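/- Let G be a connected graph with Perron vector x, and let u, v be vertices with x_u ≥ x_v. Let v_1,…,v_s be vertices adjacent to v but not adjacent to u and distinct from u. Let G* be obtained from G by deleting the edges v v_i and adding the edges u v_i for 1 ≤ i ≤ s. Then ρ(G*) > ρ(G). -/

import Mathlib

open SimpleGraph Finset

open scoped Classical in
/-- The adjacency matrix of a graph over `ℝ` (using classical decidability). -/
noncomputable def adjMat {V : Type*} [Fintype V] [DecidableEq V] (G : SimpleGraph V) :
    Matrix V V ℝ :=
  fun a b => if G.Adj a b then 1 else 0

theorem adjMat_isHermitian {V : Type*} [Fintype V] [DecidableEq V] (G : SimpleGraph V) :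
    (adjMat G).IsHermitian := by
  ext a b
  rw [Matrix.conjTranspose_apply]
  by_cases h : G.Adj a b
  · simp [adjMat, h, h.symm]
  · simp [adjMat, h, mt (fun h' : G.Adj b a => h'.symm) h]

/-- The spectral radius (specRad) (largest adjacency eigenvalue) of a graph. -/
noncomputable def specRad {V : Type*} [Fintype V] [DecidableEq V]
    (G : SimpleGraph V) : ℝ :=
  ⨆ a : V, (adjMat_isHermitian G).eigenvalues a

/-- A cactus: any two distinct cycles (distinct as edge sets) share at most one vertex. -/
def IsCactus {V : Type*} [DecidableEq V] (G : SimpleGraph V) : Prop :=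
  ∀ ⦃u v : V⦄ (c₁ : G.Walk u u) (c₂ : G.Walk v v), c₁.IsCycle → c₂.IsCycle →
    c₁.edges.toFinset ≠ c₂.edges.toFinset →
      (c₁.support.toFinset ∩ c₂.support.toFinset).card ≤ 1

/-- A unicyclic graph: connected with exactly one cycle (one cycle edge set). -/
def Unicyclic {V : Type*} [DecidableEq V] (G : SimpleGraph V) : Prop :=
  G.Connected ∧ ∃! E : Finset (Sym2 V), ∃ (w : V) (c : G.Walk w w),
    c.IsCycle ∧ c.edges.toFinset = E

/-- The star `K_{1,n-1}` on `Fin n` with center `0`. -/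
def starGraph (n : ℕ) : SimpleGraph (Fin n) where
  Adj a b := a ≠ b ∧ ((a : ℕ) = 0 ∨ (b : ℕ) = 0)
  symm := by constructor; intros; tauto
  loopless := by constructor; intros; tauto

/-- `K_{1,n-1}^+`: the star plus one edge between the leaves `1` and `2`. -/
def starPlus (n : ℕ) : SimpleGraph (Fin n) where
  Adj a b := a ≠ b ∧ ((a : ℕ) = 0 ∨ (b : ℕ) = 0 ∨ ((a : ℕ) ≤ 2 ∧ (b : ℕ) ≤ 2))
  symm := by constructor; intros; tauto
  loopless := by constructor; intros; tauto

/-- `H_n`: the star `K_{1,n-1}` plus `⌊(n-1)/2⌋` independent edges `(1,2), (3,4), …`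
between pairs of leaves. -/
def Hgraph (n : ℕ) : SimpleGraph (Fin n) where
  Adj a b := a ≠ b ∧ ((a : ℕ) = 0 ∨ (b : ℕ) = 0 ∨
    ((a : ℕ) % 2 = 1 ∧ (b : ℕ) = a + 1) ∨ ((b : ℕ) % 2 = 1 ∧ (a : ℕ) = b + 1))
  symm := by constructor; intros; tauto
  loopless := by constructor; intros; tauto

/-- Rewiring: delete the edges `v w` and add the edges `u w` for `w ∈ S`. -/
def rewire {V : Type*} (G : SimpleGraph V) (u v : V) (S : Set V) : SimpleGraph V :=
  SimpleGraph.fromEdgeSet ((G.edgeSet \ {e | ∃ w ∈ S, e = s(v, w)}) ∪ {e | ∃ w ∈ S, e = s(u, w)})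

/-- An edge lies in a triangle of `G`. -/
def InTriangle {V : Type*} (G : SimpleGraph V) (e : Sym2 V) : Prop :=
  ∃ a b c : V, G.Adj a b ∧ G.Adj b c ∧ G.Adj a c ∧
    (e = s(a, b) ∨ e = s(b, c) ∨ e = s(a, c))

/-!
The Perron vector `x` of `G` is a unit test vector for the Rayleigh quotient of
`G* = rewire G u v S`: `ρ(G*) ≥ xᵀ A(G*) x = ρ(G) + 2 (x_u - x_v) ∑_{w ∈ S} x_w ≥ ρ(G)`.
Equality would put `x` in the kernel of the positive semidefinite matrix `ρ(G*) I - A(G*)`,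
making it an eigenvector of `A(G*)` for `ρ(G)`; but the `v`-entry of `A(G*) x` is
`ρ(G) x_v - ∑_{w ∈ S} x_w < ρ(G) x_v`.
-/

open Matrix

namespace Matrix.IsHermitian

variable {n : Type*} [Fintype n] [DecidableEq n] {B : Matrix n n ℝ}

theorem posSemidef_iSup_eigenvalues_smul_one_sub (hB : B.IsHermitian) :
    ((⨆ i, hB.eigenvalues i) • (1 : Matrix n n ℝ) - B).PosSemidef := by
  set μ := ⨆ i, hB.eigenvalues i
  set U : Matrix n n ℝ := (hB.eigenvectorUnitary : Matrix n n ℝ)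
  have hle : ∀ i, hB.eigenvalues i ≤ μ := le_ciSup (Set.finite_range _).bddAbove
  have hUU : U * star U = 1 := mem_unitaryGroup_iff.mp hB.eigenvectorUnitary.2
  have hdiag : diagonal (fun i => μ - hB.eigenvalues i) =
      μ • (1 : Matrix n n ℝ) - diagonal (RCLike.ofReal ∘ hB.eigenvalues) := by
    ext a b
    by_cases h : a = b <;> simp [diagonal, h]
  have hspec :
      μ • (1 : Matrix n n ℝ) - B = U * diagonal (fun i => μ - hB.eigenvalues i) * Uᴴ := by
    rw [hdiag, mul_sub, sub_mul, ← star_eq_conjTranspose, Matrix.mul_smul, mul_one,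
      Matrix.smul_mul, hUU]
    conv_lhs => rw [hB.spectral_theorem, Unitary.conjStarAlgAut_apply]
  rw [hspec]
  exact (PosSemidef.diagonal fun i => sub_nonneg.mpr (hle i)).mul_mul_conjTranspose_same _

theorem dotProduct_mulVec_le_iSup_eigenvalues (hB : B.IsHermitian) (x : n → ℝ) :
    x ⬝ᵥ B *ᵥ x ≤ (⨆ i, hB.eigenvalues i) * (x ⬝ᵥ x) := by
  have h := hB.posSemidef_iSup_eigenvalues_smul_one_sub.dotProduct_mulVec_nonneg x
  rw [sub_mulVec, smul_mulVec, one_mulVec, dotProduct_sub, dotProduct_smul] at h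
  simpa using h

theorem mulVec_eq_of_dotProduct_mulVec_eq_iSup_eigenvalues (hB : B.IsHermitian) {x : n → ℝ}
    (h : x ⬝ᵥ B *ᵥ x = (⨆ i, hB.eigenvalues i) * (x ⬝ᵥ x)) :
    B *ᵥ x = (⨆ i, hB.eigenvalues i) • x := by
  have h0 := (hB.posSemidef_iSup_eigenvalues_smul_one_sub.dotProduct_mulVec_zero_iff x).mp
  rw [sub_mulVec, smul_mulVec, one_mulVec, dotProduct_sub, dotProduct_smul] at h0
  simp only [star_trivial, smul_eq_mul, h, sub_self, forall_const] at h0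
  exact (sub_eq_zero.mp h0).symm

end Matrix.IsHermitian

namespace SimpleGraph

variable {V : Type*}

def spokes (c : V) (S : Set V) : SimpleGraph V :=
  fromEdgeSet {e | ∃ w ∈ S, e = s(c, w)}

theorem spokes_adj {c : V} {S : Set V} {a b : V} :
    (spokes c S).Adj a b ↔ (a = c ∧ b ∈ S ∨ b = c ∧ a ∈ S) ∧ a ≠ b := by
  simp only [spokes, fromEdgeSet_adj, Set.mem_ofPred_eq, Sym2.eq_iff]
  constructor
  · rintro ⟨⟨w, hw, ⟨rfl, rfl⟩ | ⟨rfl, rfl⟩⟩, hab⟩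
    exacts [⟨Or.inl ⟨rfl, hw⟩, hab⟩, ⟨Or.inr ⟨rfl, hw⟩, hab⟩]
  · rintro ⟨⟨rfl, hb⟩ | ⟨rfl, ha⟩, hab⟩
    exacts [⟨⟨b, hb, Or.inl ⟨rfl, rfl⟩⟩, hab⟩,
      ⟨⟨a, ha, Or.inr ⟨rfl, rfl⟩⟩, hab⟩]

theorem rewire_eq_sdiff_sup (G : SimpleGraph V) (u v : V) (S : Set V) :
    rewire G u v S = G \ spokes v S ⊔ spokes u S := by
  ext a b
  simp only [rewire, spokes, fromEdgeSet_adj, sup_adj, sdiff_adj, Set.mem_union, Set.mem_sdiff,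
    mem_edgeSet]
  have := G.ne_of_adj (a := a) (b := b)
  tauto

theorem spokes_le {G : SimpleGraph V} {c : V} {S : Set V} (h : ∀ w ∈ S, G.Adj c w) :
    spokes c S ≤ G := by
  intro a b hab
  obtain ⟨⟨rfl, hb⟩ | ⟨rfl, ha⟩, -⟩ := spokes_adj.mp hab
  exacts [h b hb, (h a ha).symm]

theorem disjoint_spokes {G : SimpleGraph V} {c : V} {S : Set V} (h : ∀ w ∈ S, ¬G.Adj c w) :
    Disjoint G (spokes c S) := by
  rw [disjoint_iff]
  ext a b
  simp only [inf_adj, bot_adj, iff_false, not_and]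
  intro hab hs
  obtain ⟨⟨rfl, hb⟩ | ⟨rfl, ha⟩, -⟩ := spokes_adj.mp hs
  exacts [h b hb hab, h a ha hab.symm]

end SimpleGraph

section adjMat

open SimpleGraph

variable {V : Type*} [Fintype V] [DecidableEq V]

theorem adjMat_sup {H K : SimpleGraph V} (h : Disjoint H K) :
    adjMat (H ⊔ K) = adjMat H + adjMat K := by
  ext a b
  have hHK : ¬(H.Adj a b ∧ K.Adj a b) := fun hab => disjoint_iff_inf_le.mp h hab
  by_cases hH : H.Adj a b <;> by_cases hK : K.Adj a b <;> simp_all [adjMat]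

theorem adjMat_sdiff {H K : SimpleGraph V} (h : K ≤ H) :
    adjMat (H \ K) = adjMat H - adjMat K := by
  ext a b
  have hKH := @h a b
  by_cases hH : H.Adj a b <;> by_cases hK : K.Adj a b <;> simp_all [adjMat]

theorem adjMat_spokes_apply {c : V} {S : Finset V} (hc : c ∉ S) (a b : V) :
    adjMat (spokes c ↑S) a b =
      (if a = c ∧ b ∈ S then 1 else 0) + if b = c ∧ a ∈ S then 1 else 0 := by
  simp only [adjMat, spokes_adj, Finset.mem_coe]
  split_ifs <;> grind

theorem adjMat_spokes_mulVec {c : V} {S : Finset V} (hc : c ∉ S) (x : V → ℝ) (a : V) :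
    (adjMat (spokes c ↑S) *ᵥ x) a =
      (if a = c then ∑ w ∈ S, x w else 0) + if a ∈ S then x c else 0 := by
  simp only [mulVec, dotProduct, adjMat_spokes_apply hc, add_mul,
    Finset.sum_add_distrib, ite_mul, one_mul, zero_mul]
  rcases eq_or_ne a c with rfl | ha
  · simp [hc]
  · by_cases haS : a ∈ S <;> simp [ha, haS]

theorem dotProduct_adjMat_spokes_mulVec {c : V} {S : Finset V} (hc : c ∉ S) (x : V → ℝ) :
    x ⬝ᵥ adjMat (spokes c ↑S) *ᵥ x = 2 * x c * ∑ w ∈ S, x w := by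
  simp only [dotProduct, adjMat_spokes_mulVec hc, mul_add, mul_ite, mul_zero,
    Finset.sum_add_distrib, Finset.sum_ite_eq', Finset.mem_univ, if_true, Finset.sum_ite_mem,
    Finset.univ_inter, ← Finset.sum_mul]
  ring

end adjMat

theorem lt_specRad_of_le_dotProduct_mulVec {V : Type*} [Fintype V] [DecidableEq V]
    {H : SimpleGraph V} {x : V → ℝ} (hx : x ⬝ᵥ x = 1) {c : ℝ}
    (hc : c ≤ x ⬝ᵥ adjMat H *ᵥ x) (hne : adjMat H *ᵥ x ≠ c • x) : c < specRad H := by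
  have hle := (adjMat_isHermitian H).dotProduct_mulVec_le_iSup_eigenvalues x
  rw [hx, mul_one] at hle
  refine lt_of_le_of_ne (hc.trans hle) fun hρ => hne ?_
  rw [hρ]
  refine (adjMat_isHermitian H).mulVec_eq_of_dotProduct_mulVec_eq_iSup_eigenvalues ?_
  rw [hx, mul_one]
  exact le_antisymm hle (hρ ▸ hc : specRad H ≤ _)

theorem specRad_lt_specRad_rewire_general {V : Type*} [Fintype V] [DecidableEq V]
    (G : SimpleGraph V) (x : V → ℝ)
    (hpos : ∀ w, 0 < x w) (hunit : ∑ w, x w ^ 2 = 1)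
    (heig : (adjMat G).mulVec x = specRad G • x)
    (u v : V) (S : Finset V) (hS : S.Nonempty)
    (hSv : ∀ w ∈ S, G.Adj v w) (hSu : ∀ w ∈ S, ¬ G.Adj u w ∧ w ≠ u)
    (hx : x v ≤ x u) :
    specRad G < specRad (rewire G u v ↑S) := by
  obtain ⟨w₀, hw₀⟩ := hS
  have huS : u ∉ S := fun h => (hSu u h).2 rfl
  have hvS : v ∉ S := fun h => G.irrefl (hSv v h)
  have hvu : v ≠ u := by rintro rfl; exact (hSu w₀ hw₀).1 (hSv w₀ hw₀)
  have hT : 0 < ∑ w ∈ S, x w := Finset.sum_pos (fun w _ => hpos w) ⟨w₀, hw₀⟩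
  have hxx : x ⬝ᵥ x = 1 := by simpa [dotProduct, sq] using hunit
  have hB : adjMat (rewire G u v ↑S) =
      adjMat G - adjMat (spokes v ↑S) + adjMat (spokes u ↑S) := by
    have hdisj : Disjoint (G \ spokes v ↑S) (spokes u ↑S) :=
      (disjoint_spokes fun w hw => (hSu w hw).1).mono_left sdiff_le
    rw [rewire_eq_sdiff_sup, adjMat_sup hdisj, adjMat_sdiff (spokes_le hSv)]
  refine lt_specRad_of_le_dotProduct_mulVec hxx ?_ fun h => ?_
  · rw [hB, add_mulVec, sub_mulVec, dotProduct_add, dotProduct_sub, heig, dotProduct_smul, hxx,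
      dotProduct_adjMat_spokes_mulVec hvS, dotProduct_adjMat_spokes_mulVec huS, smul_eq_mul]
    nlinarith [mul_nonneg (sub_nonneg.mpr hx) hT.le]
  · have hrow := congrFun h v
    rw [hB, add_mulVec, sub_mulVec, Pi.add_apply, Pi.sub_apply, heig, adjMat_spokes_mulVec hvS,
      adjMat_spokes_mulVec huS, if_pos rfl, if_neg hvu, if_neg hvS, if_neg hvS] at hrow
    linarith

theorem specRad_lt_specRad_rewire {V : Type*} [Fintype V] [DecidableEq V]
    (G : SimpleGraph V) (hG : G.Connected) (x : V → ℝ)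
    (hpos : ∀ w, 0 < x w) (hunit : ∑ w, x w ^ 2 = 1)
    (heig : (adjMat G).mulVec x = specRad G • x)
    (u v : V) (S : Finset V) (hS : S.Nonempty)
    (hSv : ∀ w ∈ S, G.Adj v w) (hSu : ∀ w ∈ S, ¬ G.Adj u w ∧ w ≠ u)
    (hx : x v ≤ x u) :
    specRad G < specRad (rewire G u v ↑S) :=
  specRad_lt_specRad_rewire_general G x hpos hunit heig u v S hS hSv hSu hx
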